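/- arXiv:2106.06218 — 2 statements merged into one kernel-verified Lean document; each statement's English description precedes it below -/
import Mathlib

section
/- Let 𝔸 = (A₁,…,A_T) be row-stochastic N×N matrices, α^{(0)},…,α^{(K)} probability vectors, X ∈ ℝ^{N×F}, W ∈ ℝ^{F×d}. Define the GTN output adjacency A^{(K)} recursively by A^{(0)} = α^{(0)}·𝔸 and A^{(k)} = (D̂^{(k)})^{-1} A^{(k-1)}(α^{(k)}·𝔸), where D̂^{(k)} is the degree matrix of A^{(k-1)}(α^{(k)}·𝔸}. Then A^{(K)} X W = (α^{(0)}·𝔸)((α^{(1)}·𝔸)(⋯((α^{(K)}·𝔸) X W))), i.e., the explicit GTN graph transformation equals the implicit FastGTN feature-propagation computation. -/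
/-! Combinations with weights summing to one and products of row-stochastic matrices are row-stochastic, so every
degree normalization in the GTN recursion is the identity and `A^{(K)}` is the plain product of
the factors `α^{(k)}·𝔸`; associativity turns that product applied to `X W` into the successive
propagations. -/

open Matrix BigOperators
open Fin.NatCast

def RowStochastic {N : ℕ} (M : Matrix (Fin N) (Fin N) ℝ) : Prop :=
  ∀ i, ∑ j, M i j = 1

/-- Inverse of the diagonal degree matrix of a matrix. -/
noncomputable def degInv {N : ℕ} (M : Matrix (Fin N) (Fin N) ℝ) : Matrix (Fin N) (Fin N) ℝ :=
  Matrix.diagonal (fun i => (∑ j, M i j)⁻¹)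

section RowStochastic

variable {N : ℕ}

theorem rowStochastic_iff_mulVec_one (M : Matrix (Fin N) (Fin N) ℝ) :
    RowStochastic M ↔ M *ᵥ 1 = 1 := by
  simp [RowStochastic, funext_iff, mulVec, dotProduct]

theorem rowStochastic_one : RowStochastic (1 : Matrix (Fin N) (Fin N) ℝ) := by
  rw [rowStochastic_iff_mulVec_one, one_mulVec]

theorem RowStochastic.mul {M P : Matrix (Fin N) (Fin N) ℝ}
    (hM : RowStochastic M) (hP : RowStochastic P) : RowStochastic (M * P) := by
  rw [rowStochastic_iff_mulVec_one] at *
  rw [← mulVec_mulVec, hP, hM]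

theorem RowStochastic.list_prod {l : List (Matrix (Fin N) (Fin N) ℝ)}
    (hl : ∀ M ∈ l, RowStochastic M) : RowStochastic l.prod := by
  induction l with
  | nil => exact rowStochastic_one
  | cons M l ih =>
    rw [List.prod_cons]
    exact (hl M List.mem_cons_self).mul (ih fun P hP => hl P (List.mem_cons_of_mem M hP))

theorem rowStochastic_sum_smul {T : ℕ} {A : Fin T → Matrix (Fin N) (Fin N) ℝ}
    (hA : ∀ t, RowStochastic (A t)) {c : Fin T → ℝ} (hc : ∑ t, c t = 1) :
    RowStochastic (∑ t, c t • A t) := by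
  simp only [rowStochastic_iff_mulVec_one] at *
  simp [sum_mulVec, smul_mulVec, hA, ← Finset.sum_smul, hc]

theorem degInv_eq_one {M : Matrix (Fin N) (Fin N) ℝ} (hM : RowStochastic M) : degInv M = 1 := by
  simp [degInv, hM _, diagonal_one]

end RowStochastic

theorem List.foldr_mul_eq_prod_mul {m n : Type*} [Fintype m] [DecidableEq m] {R : Type*} [Semiring R]
    (l : List (Matrix m m R)) (M : Matrix m n R) :
    l.foldr (· * ·) M = l.prod * M := by
  induction l with
  | nil => simp
  | cons P l ih => simp [ih, Matrix.mul_assoc]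

theorem eq_prod_of_degInv_recursion {N K : ℕ} {B : ℕ → Matrix (Fin N) (Fin N) ℝ}
    (hB : ∀ k, RowStochastic (B k)) {S : ℕ → Matrix (Fin N) (Fin N) ℝ} (h0 : S 0 = B 0)
    (hrec : ∀ k < K, S (k + 1) = degInv (S k * B (k + 1)) * (S k * B (k + 1))) :
    ∀ n ≤ K, S n = (List.ofFn fun i : Fin (n + 1) => B i).prod := by
  intro n
  induction n with
  | zero => simp [h0]
  | succ m ih =>
    intro hm
    have hprod := ih (by omega)
    have hrs : RowStochastic (S m * B (m + 1)) :=
      (hprod ▸ RowStochastic.list_prod (by simp [hB])).mul (hB _)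
    rw [hrec m (by omega), degInv_eq_one hrs, Matrix.one_mul, List.ofFn_succ',
      List.concat_eq_append, List.prod_append, List.prod_singleton, hprod]
    simp only [Fin.val_castSucc, Fin.val_last]

theorem gtn_eq_fastgtn_general {N T K F d : ℕ}
    (A : Fin T → Matrix (Fin N) (Fin N) ℝ)
    (α : Fin (K + 1) → Fin T → ℝ)
    (hA : ∀ t, RowStochastic (A t))
    (hα1 : ∀ k, ∑ t, α k t = 1)
    (X : Matrix (Fin N) (Fin F) ℝ) (W : Matrix (Fin F) (Fin d) ℝ)
    (Aseq : ℕ → Matrix (Fin N) (Fin N) ℝ)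
    (h0 : Aseq 0 = ∑ t, α 0 t • A t)
    (hrec : ∀ k : ℕ, k < K →
      Aseq (k + 1) =
        degInv (Aseq k * ∑ t, α (k + 1) t • A t) * (Aseq k * ∑ t, α (k + 1) t • A t)) :
    Aseq K * X * W =
      (List.ofFn (fun k : Fin (K + 1) => ∑ t, α k t • A t)).foldr (· * ·) (X * W) := by
  set B : ℕ → Matrix (Fin N) (Fin N) ℝ := fun k => ∑ t, α k t • A t
  have hB : ∀ k, RowStochastic (B k) := fun k => rowStochastic_sum_smul hA (hα1 k)
  have hrecB : ∀ k < K, Aseq (k + 1) = degInv (Aseq k * B (k + 1)) * (Aseq k * B (k + 1)) := by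
    intro k hk
    simpa only [B, Nat.cast_add_one] using hrec k hk
  rw [Matrix.mul_assoc, List.foldr_mul_eq_prod_mul,
    eq_prod_of_degInv_recursion hB (by simpa [B] using h0) hrecB K le_rfl]
  simp only [B, Fin.cast_val_eq_self]

theorem gtn_eq_fastgtn {N T K F d : ℕ}
    (A : Fin T → Matrix (Fin N) (Fin N) ℝ)
    (α : Fin (K + 1) → Fin T → ℝ)
    (hA : ∀ t, RowStochastic (A t))
    (hα0 : ∀ k t, 0 ≤ α k t) (hα1 : ∀ k, ∑ t, α k t = 1)
    (X : Matrix (Fin N) (Fin F) ℝ) (W : Matrix (Fin F) (Fin d) ℝ)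
    (Aseq : ℕ → Matrix (Fin N) (Fin N) ℝ)
    (h0 : Aseq 0 = ∑ t, α 0 t • A t)
    (hrec : ∀ k : ℕ, k < K →
      Aseq (k + 1) =
        degInv (Aseq k * ∑ t, α (k + 1) t • A t) * (Aseq k * ∑ t, α (k + 1) t • A t)) :
    Aseq K * X * W =
      (List.ofFn (fun k : Fin (K + 1) => ∑ t, α k t • A t)).foldr (· * ·) (X * W) :=
  gtn_eq_fastgtn_general A α hA hα1 X W Aseq h0 hrec
end

section
/- If A is a row-stochastic N×N matrix and 𝔸 = (A, I), then with K = 1, C = 1, γ = 1/2 and selection vector α = (1, 0), the FastGTN pre-activation output γXW + (1-γ)(α·𝔸)XW equals the GCN pre-activation D̃^{-1}(A+I)XW, where D̃ is the degree matrix of A+I. -/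
open Matrix BigOperators

def degMatrix {N : ℕ} (M : Matrix (Fin N) (Fin N) ℝ) : Matrix (Fin N) (Fin N) ℝ :=
  Matrix.diagonal (fun i => ∑ j, M i j)

theorem gcn_special_case_of_fastgtn {N F d : ℕ} (A : Matrix (Fin N) (Fin N) ℝ)
    (hA : RowStochastic A)
    (X : Matrix (Fin N) (Fin F) ℝ) (W : Matrix (Fin F) (Fin d) ℝ) :
    (1 / 2 : ℝ) • (X * W) +
        (1 - 1 / 2 : ℝ) • (((1 : ℝ) • A + (0 : ℝ) • (1 : Matrix (Fin N) (Fin N) ℝ)) * (X * W)) =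
      (degMatrix (A + 1))⁻¹ * ((A + 1) * X * W) := by
  have hdeg : degMatrix (A + 1) = (2 : ℝ) • (1 : Matrix (Fin N) (Fin N) ℝ) := by
    unfold degMatrix
    have : (fun i => ∑ j, (A + 1) i j) = fun _ => (2 : ℝ) := by
      funext i
      simp [Matrix.add_apply, Finset.sum_add_distrib, hA i, Matrix.one_apply,
        Finset.sum_ite_eq]
      ring
    rw [this, ← Matrix.smul_one_eq_diagonal]
  have hinv : (degMatrix (A + 1))⁻¹ = (2⁻¹ : ℝ) • (1 : Matrix (Fin N) (Fin N) ℝ) := by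
    rw [hdeg]
    apply Matrix.inv_eq_right_inv
    rw [Matrix.smul_mul, Matrix.mul_smul, smul_smul]
    norm_num
  rw [hinv]
  rw [Matrix.smul_mul, Matrix.one_mul]
  rw [Matrix.add_mul, Matrix.add_mul, Matrix.one_mul, Matrix.add_mul, Matrix.mul_assoc]
  simp [smul_add]
  norm_num [add_comm]
end
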